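/- arXiv:math/9701205 — 2 statements merged into one kernel-verified Lean document; each statement's English description precedes it below -/
import Mathlib

section
/- Fix m ≥ 0 and c ∈ ℝ. Suppose h₁ ≤ h₂ and A₁, A₂ ∈ ℝ satisfy ∫_{A_i}^{∞} (x − c) Φ(m x + h_i) dμ₁(x) = 0 for i = 1, 2 (i.e. the x-coordinate of the μ₂-centroid of the region R₂(h_i, A_i) = {(x,y) : x ≥ A_i, y ≤ m x + h_i} equals c). Then A₁ ≤ A₂. -/
open Real MeasureTheory Set

/-- The standard Gaussian measure on `ℝ`, with density `(2π)^{-1/2} exp(−x²/2)`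
with respect to Lebesgue measure. -/
noncomputable def stdGaussian1 : Measure ℝ :=
  volume.withDensity fun x =>
    ENNReal.ofReal ((Real.sqrt (2 * Real.pi))⁻¹ * Real.exp (-x ^ 2 / 2))

/-- The standard normal cumulative distribution function
`Φ(x) = (2π)^{-1/2} ∫_{−∞}^x exp(−t²/2) dt`. -/
noncomputable def stdNormalCDF (x : ℝ) : ℝ :=
  (Real.sqrt (2 * Real.pi))⁻¹ * ∫ t in Set.Iic x, Real.exp (-t ^ 2 / 2)

section Aux

open Filter

/-- The standard Gaussian density. -/
noncomputable def gpdf (x : ℝ) : ℝ := (Real.sqrt (2 * Real.pi))⁻¹ * Real.exp (-x ^ 2 / 2)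

lemma gpdf_pos (x : ℝ) : 0 < gpdf x :=
  mul_pos (inv_pos.2 (Real.sqrt_pos.2 (by positivity))) (Real.exp_pos _)

lemma int_exp_sq : Integrable (fun t : ℝ => Real.exp (-t ^ 2 / 2)) := by
  have := integrable_exp_neg_mul_sq (by norm_num : (0:ℝ) < 1/2)
  exact this.congr (Filter.Eventually.of_forall fun x => by ring_nf)

lemma gpdf_integrable : Integrable gpdf := (int_exp_sq.const_mul _)

lemma gpdf_continuous : Continuous gpdf := by unfold gpdf; fun_prop

lemma cdf_pos (x : ℝ) : 0 < stdNormalCDF x := by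
  apply mul_pos (inv_pos.2 (Real.sqrt_pos.2 (by positivity)))
  rw [setIntegral_pos_iff_support_of_nonneg_ae]
  · have : Function.support (fun t : ℝ => Real.exp (-t ^ 2 / 2)) = Set.univ := by
      ext t; simp [Function.mem_support, (Real.exp_pos _).ne']
    rw [this]
    simp
  · filter_upwards with t using (Real.exp_pos _).le
  · exact int_exp_sq.integrableOn

lemma cdf_le_one (x : ℝ) : stdNormalCDF x ≤ 1 := by
  have h1 : ∫ t in Set.Iic x, Real.exp (-t ^ 2 / 2) ≤ ∫ t : ℝ, Real.exp (-t ^ 2 / 2) :=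
    setIntegral_le_integral int_exp_sq (by filter_upwards with t using (Real.exp_pos _).le)
  have h2 : ∫ t : ℝ, Real.exp (-t ^ 2 / 2) = Real.sqrt (2 * Real.pi) := by
    have := integral_gaussian (1/2)
    rw [show Real.pi / (1/2) = 2 * Real.pi by ring] at this
    rw [← this]; congr 1; ext t; ring_nf
  have hs : 0 < Real.sqrt (2 * Real.pi) := Real.sqrt_pos.2 (by positivity)
  rw [stdNormalCDF]
  calc (Real.sqrt (2 * Real.pi))⁻¹ * ∫ t in Set.Iic x, Real.exp (-t ^ 2 / 2)
      ≤ (Real.sqrt (2 * Real.pi))⁻¹ * Real.sqrt (2 * Real.pi) := by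
        apply mul_le_mul_of_nonneg_left (h2 ▸ h1) (inv_pos.2 hs).le
    _ = 1 := inv_mul_cancel₀ hs.ne'

lemma cdf_eq (y : ℝ) : stdNormalCDF y = (Real.sqrt (2 * Real.pi))⁻¹ *
    ((∫ t in Set.Iic (0:ℝ), Real.exp (-t ^ 2 / 2)) + ∫ t in (0:ℝ)..y, Real.exp (-t ^ 2 / 2)) := by
  rw [stdNormalCDF]; congr 1
  rw [← intervalIntegral.integral_Iic_sub_Iic int_exp_sq.integrableOn int_exp_sq.integrableOn]
  ring

lemma cdf_hasDeriv (x : ℝ) : HasDerivAt stdNormalCDF (gpdf x) x := by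
  have hc : Continuous fun t : ℝ => Real.exp (-t ^ 2 / 2) := by fun_prop
  have h : HasDerivAt (fun u => ∫ t in (0:ℝ)..u, Real.exp (-t ^ 2 / 2)) (Real.exp (-x ^ 2 / 2)) x :=
    intervalIntegral.integral_hasDerivAt_right int_exp_sq.intervalIntegrable
      hc.stronglyMeasurable.stronglyMeasurableAtFilter hc.continuousAt
  have h2 := ((h.const_add (∫ t in Set.Iic (0:ℝ), Real.exp (-t ^ 2 / 2))).const_mul
    ((Real.sqrt (2 * Real.pi))⁻¹))
  have he : stdNormalCDF = fun y => (Real.sqrt (2 * Real.pi))⁻¹ *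
      ((∫ t in Set.Iic (0:ℝ), Real.exp (-t ^ 2 / 2)) + ∫ t in (0:ℝ)..y, Real.exp (-t ^ 2 / 2)) :=
    funext cdf_eq
  rw [he, gpdf]
  exact h2

lemma cdf_continuous : Continuous stdNormalCDF :=
  continuous_iff_continuousAt.2 fun y => (cdf_hasDeriv y).continuousAt

lemma exp_hasDeriv (t : ℝ) :
    HasDerivAt (fun t : ℝ => Real.exp (-t ^ 2 / 2)) (-t * Real.exp (-t ^ 2 / 2)) t := by
  have h1 : HasDerivAt (fun t : ℝ => -t ^ 2 / 2) (-t) t := by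
    have := ((hasDerivAt_pow 2 t).neg).div_const 2
    simpa using this.congr_deriv (by ring)
  simpa [mul_comm] using h1.exp

lemma int_negt_exp (y : ℝ) :
    ∫ t in Set.Iic y, (-t) * Real.exp (-t ^ 2 / 2) = Real.exp (-y ^ 2 / 2) := by
  have hint : Integrable (fun t : ℝ => (-t) * Real.exp (-t ^ 2 / 2)) := by
    have := (integrable_mul_exp_neg_mul_sq (by norm_num : (0:ℝ) < 1/2)).neg
    exact this.congr (Filter.Eventually.of_forall fun x => by simp only [Pi.neg_apply]; ring_nf)
  have htend : Tendsto (fun t : ℝ => Real.exp (-t ^ 2 / 2)) atBot (nhds 0) := by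
    apply Real.tendsto_exp_atBot.comp
    have h1 : Tendsto (fun t : ℝ => t ^ 2) atBot atTop := by
      have ha : Tendsto (fun x : ℝ => x ^ 2) atTop atTop := tendsto_pow_atTop (by norm_num)
      have := ha.comp (tendsto_abs_atBot_atTop (G := ℝ))
      exact this.congr fun t => by simp [Function.comp, sq_abs]
    have h2 := tendsto_neg_atTop_atBot.comp (h1.atTop_div_const (by norm_num : (0:ℝ) < 2))
    exact h2.congr fun t => by simp [neg_div]
  have := integral_Iic_of_hasDerivAt_of_tendsto
    (f := fun t : ℝ => Real.exp (-t ^ 2 / 2)) (f' := fun t => (-t) * Real.exp (-t ^ 2 / 2))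
    (a := y) (m := 0)
    (Continuous.continuousWithinAt (by fun_prop))
    (fun t _ => exp_hasDeriv t) hint.integrableOn htend
  simpa using this

lemma mills (y : ℝ) : 0 ≤ y * stdNormalCDF y + gpdf y := by
  rcases le_or_gt 0 y with hy | hy
  · nlinarith [cdf_pos y, gpdf_pos y]
  · have hint : Integrable (fun t : ℝ => (-t) * Real.exp (-t ^ 2 / 2)) := by
      have := (integrable_mul_exp_neg_mul_sq (by norm_num : (0:ℝ) < 1/2)).neg
      exact this.congr (Filter.Eventually.of_forall fun x => by simp only [Pi.neg_apply]; ring_nf)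
    have hQ : (-y) * ∫ t in Set.Iic y, Real.exp (-t ^ 2 / 2) ≤ Real.exp (-y ^ 2 / 2) := by
      rw [← int_negt_exp y, ← integral_const_mul]
      refine setIntegral_mono_on (int_exp_sq.integrableOn.const_mul _) hint.integrableOn
        measurableSet_Iic fun t ht => ?_
      exact mul_le_mul_of_nonneg_right (neg_le_neg ht) (Real.exp_pos _).le
    rw [stdNormalCDF, gpdf]
    have hc : (0:ℝ) < (Real.sqrt (2 * Real.pi))⁻¹ := by positivity
    set Q := ∫ t in Set.Iic y, Real.exp (-t ^ 2 / 2) with hQdef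
    set E := Real.exp (-y ^ 2 / 2) with hEdef
    nlinarith [mul_nonneg hc.le (by linarith : (0:ℝ) ≤ y * Q + E)]

/-- The Gaussian hazard function `φ/Φ`. -/
noncomputable def haz (y : ℝ) : ℝ := gpdf y / stdNormalCDF y

lemma gpdf_hasDeriv (y : ℝ) : HasDerivAt gpdf (-y * gpdf y) y := by
  have := (exp_hasDeriv y).const_mul ((Real.sqrt (2 * Real.pi))⁻¹)
  exact this.congr_deriv (by rw [gpdf]; ring)

lemma haz_hasDeriv (y : ℝ) :
    HasDerivAt haz ((-y * gpdf y * stdNormalCDF y - gpdf y * gpdf y) / (stdNormalCDF y) ^ 2) y :=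
  (gpdf_hasDeriv y).div (cdf_hasDeriv y) (cdf_pos y).ne'

lemma haz_anti : Antitone haz := by
  apply antitone_of_deriv_nonpos
  · exact fun y => (haz_hasDeriv y).differentiableAt
  · intro y
    rw [(haz_hasDeriv y).deriv]
    apply div_nonpos_of_nonpos_of_nonneg _ (sq_nonneg _)
    nlinarith [mills y, (gpdf_pos y).le]

lemma cdf_ratio {u v δ : ℝ} (huv : u ≤ v) (hδ : 0 ≤ δ) :
    stdNormalCDF (v + δ) * stdNormalCDF u ≤ stdNormalCDF (u + δ) * stdNormalCDF v := by
  have hder : ∀ y : ℝ, HasDerivAt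
      (fun y => Real.log (stdNormalCDF (y + δ)) - Real.log (stdNormalCDF y))
      (haz (y + δ) - haz y) y := by
    intro y
    have h1 : HasDerivAt (fun y : ℝ => Real.log (stdNormalCDF (y + δ))) (haz (y + δ)) y := by
      have := (((cdf_hasDeriv (y + δ)).log (cdf_pos _).ne').comp y
        ((hasDerivAt_id y).add_const δ))
      simpa [haz, Function.comp_def] using this
    exact h1.sub (((cdf_hasDeriv y).log (cdf_pos _).ne').congr_deriv rfl)
  have hanti : Antitone fun y : ℝ =>
      Real.log (stdNormalCDF (y + δ)) - Real.log (stdNormalCDF y) := by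
    apply antitone_of_deriv_nonpos (fun y => (hder y).differentiableAt)
    intro y
    rw [(hder y).deriv]
    have := haz_anti (le_add_of_nonneg_right hδ : y ≤ y + δ)
    linarith
  have hlog := hanti huv
  simp only at hlog
  have h2 : Real.log (stdNormalCDF (v + δ) * stdNormalCDF u) ≤
      Real.log (stdNormalCDF (u + δ) * stdNormalCDF v) := by
    rw [Real.log_mul (cdf_pos _).ne' (cdf_pos _).ne',
      Real.log_mul (cdf_pos _).ne' (cdf_pos _).ne']
    linarith
  have := Real.exp_le_exp.2 h2
  rwa [Real.exp_log (mul_pos (cdf_pos _) (cdf_pos _)),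
    Real.exp_log (mul_pos (cdf_pos _) (cdf_pos _))] at this

lemma stdGaussian1_eq : stdGaussian1 = volume.withDensity fun x => ENNReal.ofReal (gpdf x) := rfl

lemma f_integrable (m c h : ℝ) :
    Integrable (fun x => (x - c) * stdNormalCDF (m * x + h)) stdGaussian1 := by
  rw [stdGaussian1_eq, integrable_withDensity_iff
    gpdf_continuous.measurable.ennreal_ofReal
    (Filter.Eventually.of_forall fun x => ENNReal.ofReal_lt_top)]
  have key : Integrable (fun x : ℝ => ((x - c) * stdNormalCDF (m * x + h)) * gpdf x) volume := by
    have h1 : Integrable (fun x : ℝ => |x| * gpdf x) volume := by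
      have := ((integrable_mul_exp_neg_mul_sq (by norm_num : (0:ℝ) < 1/2)).abs).const_mul
        ((Real.sqrt (2 * Real.pi))⁻¹)
      refine this.congr (Filter.Eventually.of_forall fun x => ?_)
      dsimp only
      rw [abs_mul, abs_of_pos (Real.exp_pos _), gpdf]
      rw [show -(1/2 : ℝ) * x ^ 2 = -x ^ 2 / 2 by ring]
      ring
    have h2 : Integrable (fun x : ℝ => |c| * gpdf x) volume := gpdf_integrable.const_mul _
    have hbound := h1.add h2
    refine hbound.mono ?_ (Filter.Eventually.of_forall fun x => ?_)
    · exact (((continuous_id.sub continuous_const).mul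
        (cdf_continuous.comp (by fun_prop))).mul gpdf_continuous).aestronglyMeasurable
    · simp only [Pi.add_apply, Real.norm_eq_abs]
      rw [abs_mul, abs_mul]
      have hg := gpdf_pos x
      have hΦ := cdf_pos (m * x + h)
      have hΦ1 := cdf_le_one (m * x + h)
      have habs : |x - c| ≤ |x| + |c| := abs_sub x c
      rw [abs_of_pos hg, abs_of_pos hΦ,
        abs_of_nonneg (by positivity : (0:ℝ) ≤ |x| * gpdf x + |c| * gpdf x)]
      calc |x - c| * stdNormalCDF (m * x + h) * gpdf x
          ≤ (|x| + |c|) * 1 * gpdf x := by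
            apply mul_le_mul_of_nonneg_right _ hg.le
            exact mul_le_mul habs hΦ1 hΦ.le (by positivity)
        _ = |x| * gpdf x + |c| * gpdf x := by ring
  refine key.congr (Filter.Eventually.of_forall fun x => ?_)
  dsimp only
  rw [ENNReal.toReal_ofReal (gpdf_pos x).le]

lemma gauss_set_pos {s : Set ℝ} (hs : MeasurableSet s) (hvol : 0 < volume s) :
    0 < stdGaussian1 s := by
  rw [stdGaussian1_eq, withDensity_apply _ hs]
  rw [lintegral_pos_iff_support gpdf_continuous.measurable.ennreal_ofReal]
  have : Function.support (fun x : ℝ => ENNReal.ofReal (gpdf x)) = Set.univ := by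
    ext x; simpa [Function.mem_support] using (ENNReal.ofReal_pos.2 (gpdf_pos x)).ne'
  rw [this]
  simpa using hvol

lemma A_lt_c (m c h A : ℝ)
    (hzero : ∫ x in Set.Ici A, (x - c) * stdNormalCDF (m * x + h) ∂stdGaussian1 = 0) :
    A < c := by
  by_contra hle
  push_neg at hle
  have hpos : 0 < ∫ x in Set.Ici A, (x - c) * stdNormalCDF (m * x + h) ∂stdGaussian1 := by
    rw [setIntegral_pos_iff_support_of_nonneg_ae]
    · refine lt_of_lt_of_le (gauss_set_pos measurableSet_Ioi (by simp : 0 < volume (Set.Ioi A)))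
        (measure_mono fun x hx => ?_)
      have hx' : A < x := hx
      exact ⟨(mul_pos (by linarith) (cdf_pos _)).ne', hx'.le⟩
    · refine (ae_restrict_iff' measurableSet_Ici).2 (Filter.Eventually.of_forall fun x hx => ?_)
      exact mul_nonneg (by simp only [mem_Ici] at hx; linarith) (cdf_pos _).le
    · exact (f_integrable m c h).integrableOn
  rw [hzero] at hpos
  exact lt_irrefl 0 hpos

lemma F2_nonpos (m c h₁ h₂ A : ℝ) (hm : 0 ≤ m) (hh : h₁ ≤ h₂)
    (h0 : ∫ x in Set.Ici A, (x - c) * stdNormalCDF (m * x + h₁) ∂stdGaussian1 = 0) :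
    ∫ x in Set.Ici A, (x - c) * stdNormalCDF (m * x + h₂) ∂stdGaussian1 ≤ 0 := by
  set K₁ := stdNormalCDF (m * c + h₁) with hK₁
  set K₂ := stdNormalCDF (m * c + h₂) with hK₂
  have hpt : ∀ x : ℝ, ((x - c) * stdNormalCDF (m * x + h₂)) * K₁ ≤
      ((x - c) * stdNormalCDF (m * x + h₁)) * K₂ := by
    intro x
    rcases le_total c x with hcx | hxc
    · have h := cdf_ratio (u := m * c + h₁) (v := m * x + h₁) (δ := h₂ - h₁)
        (by nlinarith) (by linarith)
      rw [show m * x + h₁ + (h₂ - h₁) = m * x + h₂ by ring,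
        show m * c + h₁ + (h₂ - h₁) = m * c + h₂ by ring] at h
      nlinarith [h]
    · have h := cdf_ratio (u := m * x + h₁) (v := m * c + h₁) (δ := h₂ - h₁)
        (by nlinarith) (by linarith)
      rw [show m * c + h₁ + (h₂ - h₁) = m * c + h₂ by ring,
        show m * x + h₁ + (h₂ - h₁) = m * x + h₂ by ring] at h
      nlinarith [h]
  have hmono : ∫ x in Set.Ici A, ((x - c) * stdNormalCDF (m * x + h₂)) * K₁ ∂stdGaussian1 ≤
      ∫ x in Set.Ici A, ((x - c) * stdNormalCDF (m * x + h₁)) * K₂ ∂stdGaussian1 :=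
    setIntegral_mono ((f_integrable m c h₂).mul_const K₁).integrableOn
      ((f_integrable m c h₁).mul_const K₂).integrableOn fun x => hpt x
  rw [integral_mul_const, integral_mul_const, h0, zero_mul] at hmono
  have hK₁pos : 0 < K₁ := cdf_pos _
  by_contra hcon
  push_neg at hcon
  nlinarith [hmono, hcon, hK₁pos]

end Aux

/-- Lemma 8 (case of `R₂`): for fixed `m ≥ 0` and `c`, if `A₁`, `A₂` satisfy the centroid
conditions `∫_{A_i}^{∞} (x − c) Φ(m x + h_i) dμ₁(x) = 0` with `h₁ ≤ h₂`, then `A₁ ≤ A₂`. -/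
theorem centroid_A_monotone_in_h
    (m c : ℝ) (hm : 0 ≤ m) (h₁ h₂ A₁ A₂ : ℝ) (hh : h₁ ≤ h₂)
    (hA₁ : ∫ x in Set.Ici A₁, (x - c) * stdNormalCDF (m * x + h₁) ∂stdGaussian1 = 0)
    (hA₂ : ∫ x in Set.Ici A₂, (x - c) * stdNormalCDF (m * x + h₂) ∂stdGaussian1 = 0) :
    A₁ ≤ A₂ := by
  by_contra hcon
  push_neg at hcon
  have hc1 : A₁ < c := A_lt_c m c h₁ A₁ hA₁
  have hF2 : ∫ x in Set.Ici A₁, (x - c) * stdNormalCDF (m * x + h₂) ∂stdGaussian1 ≤ 0 :=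
    F2_nonpos m c h₁ h₂ A₁ hm hh hA₁
  have hdisj : Disjoint (Set.Ico A₂ A₁) (Set.Ici A₁) :=
    Set.disjoint_left.2 fun x hx hx' => absurd hx.2 (not_lt.2 hx')
  have hunion : Set.Ico A₂ A₁ ∪ Set.Ici A₁ = Set.Ici A₂ := Set.Ico_union_Ici_eq_Ici hcon.le
  have hsplit : ∫ x in Set.Ici A₂, (x - c) * stdNormalCDF (m * x + h₂) ∂stdGaussian1 =
      (∫ x in Set.Ico A₂ A₁, (x - c) * stdNormalCDF (m * x + h₂) ∂stdGaussian1) +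
      ∫ x in Set.Ici A₁, (x - c) * stdNormalCDF (m * x + h₂) ∂stdGaussian1 := by
    rw [← setIntegral_union hdisj measurableSet_Ici
      (f_integrable m c h₂).integrableOn (f_integrable m c h₂).integrableOn, hunion]
  have hneg : ∫ x in Set.Ico A₂ A₁, (x - c) * stdNormalCDF (m * x + h₂) ∂stdGaussian1 < 0 := by
    have hposneg : 0 < ∫ x in Set.Ico A₂ A₁,
        -((x - c) * stdNormalCDF (m * x + h₂)) ∂stdGaussian1 := by
      rw [setIntegral_pos_iff_support_of_nonneg_ae]
      · have hmeas : 0 < stdGaussian1 (Set.Ico A₂ A₁) :=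
          gauss_set_pos measurableSet_Ico
            (by rw [Real.volume_Ico]; exact ENNReal.ofReal_pos.2 (by linarith))
        refine lt_of_lt_of_le hmeas (measure_mono fun x hx => ?_)
        refine ⟨?_, hx⟩
        have hx2 : x < A₁ := hx.2
        have : (x - c) * stdNormalCDF (m * x + h₂) < 0 :=
          mul_neg_of_neg_of_pos (by linarith) (cdf_pos _)
        simp only [Function.mem_support]
        intro hzero
        rw [neg_eq_zero] at hzero
        exact absurd hzero this.ne
      · refine (ae_restrict_iff' measurableSet_Ico).2 (Filter.Eventually.of_forall fun x hx => ?_)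
        have hx2 : x < A₁ := hx.2
        have h0 : (x - c) * stdNormalCDF (m * x + h₂) ≤ 0 :=
          mul_nonpos_of_nonpos_of_nonneg (by linarith) (cdf_pos _).le
        show (0:ℝ) ≤ -((x - c) * stdNormalCDF (m * x + h₂))
        linarith
      · exact ((f_integrable m c h₂).neg).integrableOn
    rw [integral_neg] at hposneg
    linarith
  rw [hA₂] at hsplit
  linarith
end

section
/- Let m > 0, h < 0, set h₀ = h / √(1 + m²) and x₀ = (h₀ − h)/m. Let a < x₀ < b be reals with b − x₀ = x₀ − a. Then ∫_a^{x₀} ( Φ(h₀) − Φ(m x + h) ) dμ₁(x) ≤ ∫_{x₀}^{b} ( Φ(m x + h) − Φ(h₀) ) dμ₁(x); equivalently, ∫_a^b Φ(m x + h) dμ₁(x) ≥ Φ(h₀) · μ₁([a,b]). -/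
open Real MeasureTheory Set

namespace DLSaux


noncomputable def dens (x : ℝ) : ℝ := Real.exp (-x ^ 2 / 2)

lemma dens_nonneg (x : ℝ) : 0 ≤ dens x := (Real.exp_pos _).le

lemma continuous_dens : Continuous dens :=
  Real.continuous_exp.comp (by continuity)

lemma integrable_dens : Integrable dens := by
  have h := integrable_exp_neg_mul_sq (b := (1/2 : ℝ)) (by norm_num)
  have : (fun x : ℝ => Real.exp (-(1/2) * x ^ 2)) = dens := by
    funext x; unfold dens; ring_nf
  rwa [this] at h

lemma dens_neg (x : ℝ) : dens (-x) = dens x := by simp [dens]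

/-- the 2D integrand -/
noncomputable def gfun (p q : ℝ) (z : ℝ × ℝ) : ℝ :=
  dens (q + z.1) * dens (z.2 - p) - dens (q - z.1) * dens (z.2 + p)

/-- the wedge region -/
def Twedge (m c : ℝ) : Set (ℝ × ℝ) := {z | (0 < z.1 ∧ z.1 ≤ c) ∧ 0 < z.2 ∧ z.2 ≤ m * z.1}

/-- reflection across the line `p•u = q•t` in the `(t,u)` plane -/
noncomputable def Sref (p q : ℝ) : (ℝ × ℝ) →ₗ[ℝ] (ℝ × ℝ) :=
  Matrix.toLin (Module.Basis.finTwoProd ℝ) (Module.Basis.finTwoProd ℝ)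
    !![(p^2-q^2)/(p^2+q^2), 2*p*q/(p^2+q^2); 2*p*q/(p^2+q^2), -((p^2-q^2)/(p^2+q^2))]

lemma Sref_apply (p q : ℝ) (z : ℝ × ℝ) :
    Sref p q z = (((p^2-q^2) * z.1 + 2*p*q * z.2)/(p^2+q^2),
                  (2*p*q * z.1 - (p^2-q^2) * z.2)/(p^2+q^2)) := by
  unfold Sref
  rw [Matrix.toLin_finTwoProd_apply, Prod.mk.injEq]
  exact ⟨by ring, by ring⟩

lemma measurableSet_Twedge (m c : ℝ) : MeasurableSet (Twedge m c) := by
  have h1 : MeasurableSet {z : ℝ × ℝ | 0 < z.1} := measurableSet_lt measurable_const measurable_fst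
  have h2 : MeasurableSet {z : ℝ × ℝ | z.1 ≤ c} := measurableSet_le measurable_fst measurable_const
  have h3 : MeasurableSet {z : ℝ × ℝ | 0 < z.2} := measurableSet_lt measurable_const measurable_snd
  have h4 : MeasurableSet {z : ℝ × ℝ | z.2 ≤ m * z.1} :=
    measurableSet_le measurable_snd (measurable_fst.const_mul m)
  have : Twedge m c = ({z : ℝ × ℝ | 0 < z.1} ∩ {z | z.1 ≤ c}) ∩
      ({z : ℝ × ℝ | 0 < z.2} ∩ {z | z.2 ≤ m * z.1}) := by
    ext z; simp [Twedge, and_assoc]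
  rw [this]
  exact ((h1.inter h2).inter (h3.inter h4))

lemma integrable_gfun (p q : ℝ) : Integrable (gfun p q) (volume : Measure (ℝ × ℝ)) := by
  rw [Measure.volume_eq_prod]
  unfold gfun
  apply Integrable.sub
  · exact Integrable.mul_prod ((integrable_dens.comp_add_left q))
      (integrable_dens.comp_sub_right p)
  · exact Integrable.mul_prod (by simpa using integrable_dens.comp_sub_left q)
      (integrable_dens.comp_add_right p)

lemma gfun_nonneg (p q : ℝ) (z : ℝ × ℝ) (hz : q * z.1 ≤ p * z.2) : 0 ≤ gfun p q z := by
  unfold gfun dens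
  rw [sub_nonneg, ← Real.exp_add, ← Real.exp_add]
  apply Real.exp_le_exp.2
  nlinarith [hz]

lemma gfun_reflect (p q : ℝ) (z z' : ℝ × ℝ)
    (h1 : z'.1 ^ 2 + z'.2 ^ 2 = z.1 ^ 2 + z.2 ^ 2)
    (h2 : p * z'.2 - q * z'.1 = -(p * z.2 - q * z.1)) :
    gfun p q z' = - gfun p q z := by
  unfold gfun dens
  rw [← Real.exp_add, ← Real.exp_add, ← Real.exp_add, ← Real.exp_add]
  have e1 : -(q + z'.1) ^ 2 / 2 + -(z'.2 - p) ^ 2 / 2 =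
      -(q - z.1) ^ 2 / 2 + -(z.2 + p) ^ 2 / 2 := by linear_combination (-1/2) * h1 + h2
  have e2 : -(q - z'.1) ^ 2 / 2 + -(z'.2 + p) ^ 2 / 2 =
      -(q + z.1) ^ 2 / 2 + -(z.2 - p) ^ 2 / 2 := by linear_combination (-1/2) * h1 - h2
  rw [e1, e2]; ring

theorem core (m p q c : ℝ) (hm : 0 < m) (hq : 0 < q) (hqp : q < p)
    (hkey : m * (p^2 - q^2) = 2*p*q) :
    0 ≤ ∫ z in Twedge m c, gfun p q z := by
  have hp : 0 < p := hq.trans hqp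
  have hρ : 0 < p^2 + q^2 := by positivity
  have hρ' : p^2 + q^2 ≠ 0 := hρ.ne'
  -- determinant
  have hdet : LinearMap.det (Sref p q) = -1 := by
    unfold Sref
    rw [LinearMap.det_toLin, Matrix.det_fin_two_of]
    field_simp
    ring
  -- measure preserving
  have hcont : Continuous (Sref p q) := (Sref p q).continuous_of_finiteDimensional
  have hmp : MeasurePreserving (Sref p q) (volume : Measure (ℝ × ℝ)) volume := by
    refine ⟨hcont.measurable, ?_⟩
    rw [Measure.map_linearMap_addHaar_eq_smul_addHaar _ (by rw [hdet]; norm_num), hdet]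
    norm_num
  -- involution
  have hinv : ∀ z, Sref p q (Sref p q z) = z := by
    intro z
    rw [Sref_apply, Sref_apply]
    have : ∀ x y : ℝ, (((p^2-q^2) * (((p^2-q^2) * x + 2*p*q * y)/(p^2+q^2))
        + 2*p*q * ((2*p*q * x - (p^2-q^2) * y)/(p^2+q^2)))/(p^2+q^2)) = x := by
      intro x y; field_simp; ring
    ext
    · simp only
      field_simp
      ring
    · simp only
      field_simp
      ring
  -- measurable embedding
  have hemb : MeasurableEmbedding (Sref p q) := by
    let e : ℝ × ℝ ≃ᵐ ℝ × ℝ :=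
      { toFun := Sref p q
        invFun := Sref p q
        left_inv := hinv
        right_inv := hinv
        measurable_toFun := hcont.measurable
        measurable_invFun := hcont.measurable }
    exact e.measurableEmbedding
  -- sets
  set Tp : Set (ℝ × ℝ) := Twedge m c ∩ {z | q * z.1 ≤ p * z.2} with hTp
  set Tm : Set (ℝ × ℝ) := Twedge m c ∩ {z | p * z.2 < q * z.1} with hTm
  have hTpm : MeasurableSet Tp :=
    (measurableSet_Twedge m c).inter
      (measurableSet_le (measurable_fst.const_mul q) (measurable_snd.const_mul p))
  have hTmm : MeasurableSet Tm :=
    (measurableSet_Twedge m c).inter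
      (measurableSet_lt (measurable_snd.const_mul p) (measurable_fst.const_mul q))
  have hunion : Twedge m c = Tp ∪ Tm := by
    ext z; constructor
    · intro hz
      rcases le_or_gt (q * z.1) (p * z.2) with h | h
      · exact Or.inl ⟨hz, h⟩
      · exact Or.inr ⟨hz, h⟩
    · rintro (⟨hz, _⟩ | ⟨hz, _⟩) <;> exact hz
  have hdisj : Disjoint Tp Tm := by
    rw [Set.disjoint_left]
    rintro z ⟨_, h1⟩ ⟨_, h2⟩
    simp only [Set.mem_setOf_eq] at h1 h2
    linarith
  -- image of Tm under Sref is inside Tp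
  have himg : Sref p q '' Tm ⊆ Tp := by
    rintro _ ⟨z, ⟨⟨⟨ht0, htc⟩, hu0, hum⟩, hlt⟩, rfl⟩
    rw [Sref_apply]
    have ht0 : 0 < z.1 := ht0
    have htc : z.1 ≤ c := htc
    have hu0 : 0 < z.2 := hu0
    have hum : z.2 ≤ m * z.1 := hum
    have hlt' : p * z.2 < q * z.1 := hlt
    set t := z.1
    set u := z.2
    have hpq2 : 0 < p^2 - q^2 := by nlinarith
    have hqm : q < m * p := by nlinarith
    have hmtu : 0 < m * t - u := by nlinarith [mul_pos ht0 (sub_pos.2 hqm)]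
    have hBpos : 0 < 2*p*q * t - (p^2-q^2) * u := by
      have hid : 2*p*q * t - (p^2-q^2) * u = (p^2-q^2) * (m*t - u) := by
        linear_combination (-t) * hkey
      rw [hid]; exact mul_pos hpq2 hmtu
    constructor
    · refine ⟨⟨?_, ?_⟩, ?_, ?_⟩
      · exact div_pos (by nlinarith [mul_pos hpq2 ht0, mul_pos (mul_pos hp hq) hu0]) hρ
      · rw [div_le_iff₀ hρ]
        nlinarith [mul_lt_mul_of_pos_left hlt' (show (0:ℝ) < 2*q by linarith),
          mul_le_mul_of_nonneg_left htc hρ.le]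
      · exact div_pos hBpos hρ
      · rw [div_le_iff₀ hρ]
        have hcoef : 0 < 2*m*p*q + (p^2 - q^2) := by positivity
        have hclear : m * (((p^2-q^2) * t + 2*p*q * u)/(p^2+q^2)) * (p^2+q^2)
            = m * ((p^2-q^2) * t + 2*p*q * u) := by field_simp
        rw [hclear]
        have hid2 : m * ((p^2-q^2) * t + 2*p*q * u) - (2*p*q * t - (p^2-q^2) * u)
            = u * (2*m*p*q + (p^2 - q^2)) := by linear_combination t * hkey
        nlinarith [mul_pos hu0 hcoef]
    · simp only [Set.mem_setOf_eq]
      rw [show q * (((p^2-q^2) * t + 2*p*q * u)/(p^2+q^2))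
          = (q * ((p^2-q^2) * t + 2*p*q * u))/(p^2+q^2) from by ring,
        show p * ((2*p*q * t - (p^2-q^2) * u)/(p^2+q^2))
          = (p * (2*p*q * t - (p^2-q^2) * u))/(p^2+q^2) from by ring,
        div_le_div_iff₀ hρ hρ]
      nlinarith [mul_pos (mul_pos hρ hρ) (sub_pos.2 hlt')]
  -- integrability
  have hint := integrable_gfun p q
  -- split
  have hsplit : ∫ z in Twedge m c, gfun p q z =
      (∫ z in Tp, gfun p q z) + ∫ z in Tm, gfun p q z := by
    rw [hunion]
    exact setIntegral_union hdisj hTmm hint.integrableOn hint.integrableOn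
  -- reflection identity on the negative part
  have hrefl : ∫ z in Sref p q '' Tm, gfun p q z = - ∫ z in Tm, gfun p q z := by
    rw [hmp.setIntegral_image_emb hemb]
    rw [← integral_neg]
    apply setIntegral_congr_fun hTmm
    intro z _
    apply gfun_reflect
    · rw [Sref_apply]
      simp only
      field_simp
      ring
    · rw [Sref_apply]
      simp only
      field_simp
      ring
  -- positivity on Tp
  have hposTp : 0 ≤ᵐ[(volume : Measure (ℝ × ℝ)).restrict Tp] gfun p q := by
    refine (ae_restrict_iff' hTpm).2 (Filter.Eventually.of_forall fun z hz => gfun_nonneg p q z hz.2)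
  have hmono : ∫ z in Sref p q '' Tm, gfun p q z ≤ ∫ z in Tp, gfun p q z :=
    setIntegral_mono_set hint.integrableOn hposTp (HasSubset.Subset.eventuallyLE himg)
  rw [hsplit]
  have : ∫ z in Tm, gfun p q z = - ∫ z in Sref p q '' Tm, gfun p q z := by
    rw [hrefl]; ring
  rw [this]
  linarith

/-- CDF difference as an interval integral. -/
lemma cdf_sub (A B : ℝ) :
    stdNormalCDF B - stdNormalCDF A = (Real.sqrt (2 * Real.pi))⁻¹ * ∫ u in A..B, dens u := by
  unfold stdNormalCDF
  rw [← mul_sub]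
  congr 1
  exact intervalIntegral.integral_Iic_sub_Iic integrable_dens.integrableOn
    integrable_dens.integrableOn

lemma continuous_cdf : Continuous stdNormalCDF := by
  have hrepr : stdNormalCDF = fun x =>
      stdNormalCDF 0 + (Real.sqrt (2 * Real.pi))⁻¹ * ∫ u in (0:ℝ)..x, dens u := by
    funext x
    have := cdf_sub 0 x
    linarith
  rw [hrepr]
  exact continuous_const.add (continuous_const.mul
    (intervalIntegral.continuous_primitive (fun a b => integrable_dens.intervalIntegrable) 0))

lemma cdf_upper (p w : ℝ) :
    stdNormalCDF (-p + w) - stdNormalCDF (-p)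
      = (Real.sqrt (2 * Real.pi))⁻¹ * ∫ u in (0:ℝ)..w, dens (u - p) := by
  rw [cdf_sub]
  congr 1
  rw [intervalIntegral.integral_comp_sub_right dens p]
  norm_num [sub_eq_add_neg, add_comm]

lemma cdf_lower (p w : ℝ) :
    stdNormalCDF (-p) - stdNormalCDF (-p - w)
      = (Real.sqrt (2 * Real.pi))⁻¹ * ∫ u in (0:ℝ)..w, dens (u + p) := by
  rw [cdf_sub]
  congr 1
  rw [intervalIntegral.integral_comp_add_right dens p, zero_add]
  have h2 : ∫ x in p..(w+p), dens x = ∫ x in (-(w+p))..(-p), dens x := by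
    have : ∫ x in p..(w+p), dens x = ∫ x in p..(w+p), dens (-x) :=
      intervalIntegral.integral_congr fun x _ => (dens_neg x).symm
    rw [this, intervalIntegral.integral_comp_neg dens]
  rw [h2, show -(w+p) = -p - w from by ring]

/-- iterated interval integral equals the set integral over the wedge. -/
lemma iterated_eq (m p q c : ℝ) (hm : 0 < m) (hc : 0 ≤ c) :
    ∫ t in (0:ℝ)..c, (∫ u in (0:ℝ)..(m*t), gfun p q (t, u))
      = ∫ z in Twedge m c, gfun p q z := by
  have hint : Integrable ((Twedge m c).indicator (gfun p q)) (volume : Measure (ℝ × ℝ)) :=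
    (integrable_gfun p q).indicator (measurableSet_Twedge m c)
  have hprod : Integrable ((Twedge m c).indicator (gfun p q))
      ((volume : Measure ℝ).prod (volume : Measure ℝ)) := by
    rwa [Measure.volume_eq_prod] at hint
  calc ∫ t in (0:ℝ)..c, (∫ u in (0:ℝ)..(m*t), gfun p q (t, u))
      = ∫ t in Ioc (0:ℝ) c, (∫ u in (0:ℝ)..(m*t), gfun p q (t, u)) := by
        rw [intervalIntegral.integral_of_le hc]
    _ = ∫ t in Ioc (0:ℝ) c, (∫ u, (Twedge m c).indicator (gfun p q) (t, u)) := by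
        apply setIntegral_congr_fun measurableSet_Ioc
        intro t ht
        dsimp only
        rw [intervalIntegral.integral_of_le (by nlinarith [ht.1] : (0:ℝ) ≤ m * t),
          ← integral_indicator measurableSet_Ioc]
        congr 1
        funext u
        by_cases hu : u ∈ Ioc (0:ℝ) (m*t)
        · rw [indicator_of_mem hu, indicator_of_mem]
          exact ⟨⟨ht.1, ht.2⟩, hu.1, hu.2⟩
        · rw [indicator_of_notMem hu, indicator_of_notMem]
          intro hmem
          exact hu ⟨hmem.2.1, hmem.2.2⟩
    _ = ∫ t, (Ioc (0:ℝ) c).indicator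
          (fun t => ∫ u, (Twedge m c).indicator (gfun p q) (t, u)) t := by
        rw [integral_indicator measurableSet_Ioc]
    _ = ∫ t, (∫ u, (Twedge m c).indicator (gfun p q) (t, u)) := by
        congr 1
        funext t
        by_cases ht : t ∈ Ioc (0:ℝ) c
        · rw [indicator_of_mem ht]
        · rw [indicator_of_notMem ht]
          symm
          have : ∀ u, (Twedge m c).indicator (gfun p q) (t, u) = 0 := by
            intro u
            apply indicator_of_notMem
            intro hmem
            exact ht ⟨hmem.1.1, hmem.1.2⟩
          simp only [this, integral_zero]
    _ = ∫ z, (Twedge m c).indicator (gfun p q) z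
          ∂((volume : Measure ℝ).prod (volume : Measure ℝ)) := by
        rw [MeasureTheory.integral_prod _ hprod]
    _ = ∫ z, (Twedge m c).indicator (gfun p q) z ∂(volume : Measure (ℝ × ℝ)) := by
        rw [Measure.volume_eq_prod]
    _ = ∫ z in Twedge m c, gfun p q z := integral_indicator (measurableSet_Twedge m c)

end DLSaux

open DLSaux
open scoped NNReal ENNReal

theorem main' (m p q a b : ℝ) (hm : 0 < m) (hq : 0 < q) (hqp : q < p)
    (hkey : m * (p ^ 2 - q ^ 2) = 2 * p * q)
    (ha : a < q) (hb : q < b) (hsym : b - q = q - a) :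
    ∫ x in Set.Icc a q, (stdNormalCDF (-p) - stdNormalCDF (m * x + (-p - m * q))) ∂stdGaussian1 ≤
      ∫ x in Set.Icc q b, (stdNormalCDF (m * x + (-p - m * q)) - stdNormalCDF (-p)) ∂stdGaussian1 := by
  have hp : 0 < p := hq.trans hqp
  set C : ℝ := (Real.sqrt (2 * Real.pi))⁻¹ with hC
  have hCpos : 0 < C := by
    rw [hC]
    exact inv_pos.2 (Real.sqrt_pos.2 (by positivity))
  set c : ℝ := q - a with hcdef
  have hc : 0 < c := by rw [hcdef]; linarith
  set w : ℝ → ℝ := fun x => C * dens x with hw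
  have hwc : Continuous w := continuous_const.mul continuous_dens
  have hmeas : Measurable fun x : ℝ => Real.toNNReal (C * dens x) :=
    (continuous_const.mul continuous_dens).measurable.real_toNNReal
  -- step A: to Lebesgue integrals
  have stepA : ∀ (S : Set ℝ), MeasurableSet S → ∀ f : ℝ → ℝ,
      ∫ x in S, f x ∂stdGaussian1 = ∫ x in S, w x * f x := by
    intro S hS f
    have hgauss : stdGaussian1
        = volume.withDensity (fun x => ((Real.toNNReal (C * dens x) : ℝ≥0) : ℝ≥0∞)) := rfl
    rw [hgauss, setIntegral_withDensity_eq_setIntegral_smul hmeas f hS]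
    apply setIntegral_congr_fun hS
    intro x _
    dsimp only
    rw [NNReal.smul_def, Real.coe_toNNReal (C * dens x)
      (mul_nonneg hCpos.le (le_of_lt (by unfold dens; exact Real.exp_pos _))), smul_eq_mul]
  rw [stepA _ measurableSet_Icc, stepA _ measurableSet_Icc]
  rw [MeasureTheory.integral_Icc_eq_integral_Ioc, MeasureTheory.integral_Icc_eq_integral_Ioc,
    ← intervalIntegral.integral_of_le ha.le, ← intervalIntegral.integral_of_le hb.le]
  -- step B: shift to [0, c]
  have hL : ∫ x in a..q, w x * (stdNormalCDF (-p) - stdNormalCDF (m * x + (-p - m * q)))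
      = ∫ t in (0:ℝ)..c,
          w (q - t) * (stdNormalCDF (-p) - stdNormalCDF (m * (q - t) + (-p - m * q))) := by
    rw [intervalIntegral.integral_comp_sub_left
      (fun x => w x * (stdNormalCDF (-p) - stdNormalCDF (m * x + (-p - m * q)))) q]
    rw [sub_zero, hcdef, sub_sub_cancel]
  have hR : ∫ x in q..b, w x * (stdNormalCDF (m * x + (-p - m * q)) - stdNormalCDF (-p))
      = ∫ t in (0:ℝ)..c,
          w (q + t) * (stdNormalCDF (m * (q + t) + (-p - m * q)) - stdNormalCDF (-p)) := by
    rw [intervalIntegral.integral_comp_add_left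
      (fun x => w x * (stdNormalCDF (m * x + (-p - m * q)) - stdNormalCDF (-p))) q]
    rw [add_zero, show c = b - q from by rw [hcdef, hsym], show q + (b - q) = b from by ring]
  rw [hL, hR]
  -- step C: combine into a single integral
  have hcont1 : Continuous fun t =>
      w (q + t) * (stdNormalCDF (m * (q + t) + (-p - m * q)) - stdNormalCDF (-p)) := by
    apply Continuous.mul (hwc.comp (continuous_const.add continuous_id))
    refine Continuous.sub (continuous_cdf.comp ?_) continuous_const
    exact (continuous_const.mul (continuous_const.add continuous_id)).add continuous_const
  have hcont2 : Continuous fun t =>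
      w (q - t) * (stdNormalCDF (-p) - stdNormalCDF (m * (q - t) + (-p - m * q))) := by
    apply Continuous.mul (hwc.comp (continuous_const.sub continuous_id))
    refine Continuous.sub continuous_const (continuous_cdf.comp ?_)
    exact (continuous_const.mul (continuous_const.sub continuous_id)).add continuous_const
  rw [← sub_nonneg, ← intervalIntegral.integral_sub
    (hcont1.intervalIntegrable 0 c) (hcont2.intervalIntegrable 0 c)]
  -- step D: rewrite the integrand
  have hbig : ∀ t : ℝ,
      w (q + t) * (stdNormalCDF (m * (q + t) + (-p - m * q)) - stdNormalCDF (-p))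
        - w (q - t) * (stdNormalCDF (-p) - stdNormalCDF (m * (q - t) + (-p - m * q)))
      = C ^ 2 * ∫ u in (0:ℝ)..(m * t), gfun p q (t, u) := by
    intro t
    have e1 : m * (q + t) + (-p - m * q) = -p + m * t := by ring
    have e2 : m * (q - t) + (-p - m * q) = -p - m * t := by ring
    rw [e1, e2, cdf_upper p (m * t), cdf_lower p (m * t)]
    have hgsplit : (fun u => gfun p q (t, u))
        = fun u => dens (q + t) * dens (u - p) - dens (q - t) * dens (u + p) := rfl
    rw [hgsplit]
    have hi1 : IntervalIntegrable (fun u => dens (q + t) * dens (u - p)) volume 0 (m*t) :=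
      (continuous_const.mul (continuous_dens.comp
        (continuous_id.sub continuous_const))).intervalIntegrable 0 (m*t)
    have hi2 : IntervalIntegrable (fun u => dens (q - t) * dens (u + p)) volume 0 (m*t) :=
      (continuous_const.mul (continuous_dens.comp
        (continuous_id.add continuous_const))).intervalIntegrable 0 (m*t)
    rw [intervalIntegral.integral_sub hi1 hi2]
    rw [intervalIntegral.integral_const_mul, intervalIntegral.integral_const_mul]
    rw [hw]
    ring
  rw [intervalIntegral.integral_congr (fun t _ => hbig t)]
  rw [intervalIntegral.integral_const_mul]
  apply mul_nonneg (by positivity)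
  rw [iterated_eq m p q c hm hc.le]
  exact core m p q c hm hq hqp hkey

/-- Let `m > 0`, `h < 0`, `h₀ = h/√(1+m²)` and `x₀ = (h₀ − h)/m`. If `a < x₀ < b` with
`b − x₀ = x₀ − a`, then
`∫_a^{x₀} (Φ(h₀) − Φ(m x + h)) dμ₁(x) ≤ ∫_{x₀}^b (Φ(m x + h) − Φ(h₀)) dμ₁(x)`. -/
theorem deficit_le_surplus_around_crossing
    (m h h₀ x₀ a b : ℝ) (hm : 0 < m) (hh : h < 0)
    (hh₀ : h₀ = h / Real.sqrt (1 + m ^ 2)) (hx₀ : x₀ = (h₀ - h) / m)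
    (ha : a < x₀) (hb : x₀ < b) (hsym : b - x₀ = x₀ - a) :
    ∫ x in Set.Icc a x₀, (stdNormalCDF h₀ - stdNormalCDF (m * x + h)) ∂stdGaussian1 ≤
      ∫ x in Set.Icc x₀ b, (stdNormalCDF (m * x + h) - stdNormalCDF h₀) ∂stdGaussian1 := by
  have hs0 : 0 < Real.sqrt (1 + m ^ 2) := Real.sqrt_pos.2 (by positivity)
  have hs2 : Real.sqrt (1 + m ^ 2) ^ 2 = 1 + m ^ 2 := Real.sq_sqrt (by positivity)
  have hh' : h = h₀ * Real.sqrt (1 + m ^ 2) := by rw [hh₀]; field_simp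
  have hs1 : 1 < Real.sqrt (1 + m ^ 2) := by nlinarith
  have hsm : Real.sqrt (1 + m ^ 2) < 1 + m := by
    rw [Real.sqrt_lt' (by linarith)]
    nlinarith
  have hh₀neg : h₀ < 0 := by
    rw [hh₀]
    exact div_neg_of_neg_of_pos hh hs0
  have hp : 0 < -h₀ := by linarith
  have hq : 0 < x₀ := by
    rw [hx₀]
    apply div_pos _ hm
    nlinarith [mul_pos (neg_pos.2 hh₀neg) (sub_pos.2 hs1)]
  have hqm'' : x₀ * m = (-h₀) * (Real.sqrt (1 + m ^ 2) - 1) := by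
    rw [hx₀]
    field_simp
    linear_combination -hh'
  have hqp : x₀ < -h₀ := by
    have h1 : x₀ * m < (-h₀) * m := by
      rw [hqm'']
      apply mul_lt_mul_of_pos_left _ hp
      linarith
    exact lt_of_mul_lt_mul_right h1 hm.le
  have h1sq : (x₀ * m) ^ 2 = ((-h₀) * (Real.sqrt (1 + m ^ 2) - 1)) ^ 2 := by rw [hqm'']
  have hkey : m * ((-h₀) ^ 2 - x₀ ^ 2) = 2 * (-h₀) * x₀ := by
    apply mul_left_cancel₀ (pow_ne_zero 2 hm.ne')
    linear_combination (-m) * h1sq + (-2 * (-h₀) * m) * hqm'' + (-m * (-h₀)^2) * hs2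
  have hmx0 : m * x₀ + h = h₀ := by rw [hx₀]; field_simp; ring
  have hrw1 : h₀ = -(-h₀) := by ring
  have hrw2 : h = -(-h₀) - m * x₀ := by linarith
  rw [show (fun x => stdNormalCDF h₀ - stdNormalCDF (m * x + h))
      = fun x => stdNormalCDF (-(-h₀)) - stdNormalCDF (m * x + (-(-h₀) - m * x₀)) from
        funext fun x => by
          simp only [neg_neg]
          rw [show h₀ - m * x₀ = h from by linarith],
    show (fun x => stdNormalCDF (m * x + h) - stdNormalCDF h₀)
      = fun x => stdNormalCDF (m * x + (-(-h₀) - m * x₀)) - stdNormalCDF (-(-h₀)) from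
        funext fun x => by
          simp only [neg_neg]
          rw [show h₀ - m * x₀ = h from by linarith]]
  exact main' m (-h₀) x₀ a b hm hq hqp hkey ha hb hsym
end
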